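/- arXiv:1701.07203 — 5 statements merged into one kernel-verified Lean document; each statement's English description precedes it below -/
import Mathlib

section
/- Let p ∈ (0,1) and let d ∈ ℕ satisfy d > (1−p)/p. Let X be a binomial random variable with parameters d and p. Define the bias-corrected plug-in univariate risk minimizer T(X) = X²/(p(X + 1 − p)) + (1−p)/p. Then E[(T(X) − d)²] < E[(X/p − d)²] = (1−p)d/p; that is, the estimator T(X) of d has strictly smaller quadratic risk than the method of moments estimator X/p. -/
/-!
Write `q = 1 - p`. The plug-in estimator is `T(k) = k / p + q² / (p (k + q))`, so
`(T - d)² - (X / p - d)² = (q / p)² (2 (X - d p) / (X + q) + q² / (X + q)²)`.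
Stein's identity `E[(X - d p) g X] = d p q E[g (Y + 1) - g Y]`, with `Y ~ Bin(d - 1, p)`, gives
`E[(X - d p) / (X + q)] = -d p q S` where `S = E[1 / ((Y + q) (Y + q + 1))] > 0`, while
conditioning on one trial gives `E[1 / (X + q)²] ≤ 2 S`. The risk difference is therefore at most
`2 q³ S (q - d p) / p² < 0`. Stein's identity with `g x = x - d p` gives `Var X = d p q`, which is
the risk of the method of moments estimator.
-/

open MeasureTheory ProbabilityTheory Finset

noncomputable def binomWeight (p q : ℝ) (n k : ℕ) : ℝ := n.choose k * p ^ k * q ^ (n - k)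

lemma div_add_one_sq_add_div_sq_le {p q y : ℝ} (hp : 0 ≤ p) (hpq : p + q = 1) (hq : 0 < q)
    (hy : q ≤ y) :
    p / (y + 1) ^ 2 + q / y ^ 2 ≤ 2 / (y * (y + 1)) := by
  have hy₀ : 0 < y := hq.trans_le hy
  rw [div_add_div _ _ (by positivity) (by positivity),
    div_le_div_iff₀ (by positivity) (by positivity)]
  have key : p * y ^ 2 + q * (y + 1) ^ 2 ≤ 2 * (y * (y + 1)) := by
    nlinarith [mul_nonneg hp hq.le]
  nlinarith [mul_le_mul_of_nonneg_right key (by positivity : (0 : ℝ) ≤ y * (y + 1))]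

namespace binomWeight

variable {p q : ℝ}

lemma pos (hp : 0 < p) (hq : 0 < q) {n k : ℕ} (hk : k ≤ n) : 0 < binomWeight p q n k := by
  have : 0 < n.choose k := Nat.choose_pos hk
  unfold binomWeight
  positivity

lemma sum_eq_add_pow (p q : ℝ) (n : ℕ) :
    ∑ k ∈ range (n + 1), binomWeight p q n k = (p + q) ^ n := by
  rw [add_pow]
  exact sum_congr rfl fun k _ => by rw [binomWeight]; ring

lemma sum_natCast_mul (p q : ℝ) (n : ℕ) (f : ℕ → ℝ) :
    ∑ k ∈ range (n + 2), binomWeight p q (n + 1) k * (k * f k)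
      = (n + 1) * p * ∑ j ∈ range (n + 1), binomWeight p q n j * f (j + 1) := by
  rw [sum_range_succ', mul_sum]
  simp only [Nat.cast_zero, zero_mul, mul_zero, add_zero]
  refine sum_congr rfl fun j _ => ?_
  have h := congrArg (Nat.cast : ℕ → ℝ) (Nat.add_one_mul_choose_eq n j)
  push_cast at h
  simp only [binomWeight, Nat.add_sub_add_right]
  push_cast
  linear_combination (p ^ (j + 1) * q ^ (n - j) * f (j + 1)) * h.symm

lemma sum_sub_natCast_mul (p q : ℝ) (n : ℕ) (f : ℕ → ℝ) :
    ∑ k ∈ range (n + 2), binomWeight p q (n + 1) k * ((n + 1 - k) * f k)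
      = (n + 1) * q * ∑ j ∈ range (n + 1), binomWeight p q n j * f j := by
  rw [sum_range_succ, mul_sum]
  push_cast
  simp only [sub_self, zero_mul, mul_zero, add_zero]
  refine sum_congr rfl fun k hk => ?_
  have hkn : k ≤ n := Nat.lt_succ_iff.mp (mem_range.mp hk)
  have h := congrArg (Nat.cast : ℕ → ℝ) (Nat.choose_mul_succ_eq n k)
  push_cast [Nat.cast_sub (hkn.trans n.le_succ)] at h
  simp only [binomWeight, Nat.sub_add_comm hkn, pow_succ]
  linear_combination (p ^ k * q ^ (n - k) * q * f k) * h.symm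

lemma sum_succ (p q : ℝ) (n : ℕ) (f : ℕ → ℝ) :
    ∑ k ∈ range (n + 2), binomWeight p q (n + 1) k * f k
      = p * ∑ j ∈ range (n + 1), binomWeight p q n j * f (j + 1)
        + q * ∑ j ∈ range (n + 1), binomWeight p q n j * f j := by
  have hn : (n + 1 : ℝ) ≠ 0 := by positivity
  refine mul_left_cancel₀ hn ?_
  calc (n + 1 : ℝ) * ∑ k ∈ range (n + 2), binomWeight p q (n + 1) k * f k
      = ∑ k ∈ range (n + 2), (binomWeight p q (n + 1) k * (k * f k)
          + binomWeight p q (n + 1) k * ((n + 1 - k) * f k)) := by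
        rw [mul_sum]; exact sum_congr rfl fun _ _ => by ring
    _ = _ := by rw [sum_add_distrib, sum_natCast_mul, sum_sub_natCast_mul]; ring

/-- Stein's identity for the binomial distribution. -/
lemma sum_sub_mean_mul (hpq : p + q = 1) (n : ℕ) (f : ℕ → ℝ) :
    ∑ k ∈ range (n + 2), binomWeight p q (n + 1) k * ((k - (n + 1) * p) * f k)
      = (n + 1) * p * q * ∑ j ∈ range (n + 1), binomWeight p q n j * (f (j + 1) - f j) := by
  have hmean : ∑ k ∈ range (n + 2), binomWeight p q (n + 1) k * ((n + 1) * p * f k)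
      = (n + 1) * p * ∑ k ∈ range (n + 2), binomWeight p q (n + 1) k * f k := by
    rw [mul_sum]; exact sum_congr rfl fun _ _ => by ring
  calc _ = ∑ k ∈ range (n + 2), binomWeight p q (n + 1) k * (k * f k)
        - ∑ k ∈ range (n + 2), binomWeight p q (n + 1) k * ((n + 1) * p * f k) := by
        rw [← sum_sub_distrib]; exact sum_congr rfl fun _ _ => by ring
    _ = _ := by
        simp only [sum_natCast_mul, hmean, sum_succ, mul_sub, sum_sub_distrib]
        linear_combination
          (-(n + 1) * p * ∑ j ∈ range (n + 1), binomWeight p q n j * f (j + 1)) * hpq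

lemma sum_sq_sub_mean (hpq : p + q = 1) (n : ℕ) :
    ∑ k ∈ range (n + 2), binomWeight p q (n + 1) k * (k - (n + 1) * p) ^ 2
      = (n + 1) * p * q := by
  have h := sum_sub_mean_mul hpq n (fun k => k - (n + 1) * p)
  simp only [Nat.cast_add, Nat.cast_one] at h
  simpa [sq, sum_eq_add_pow, hpq] using h

lemma sum_div_sub_sq (hp : p ≠ 0) (hpq : p + q = 1) (n : ℕ) :
    ∑ k ∈ range (n + 2), binomWeight p q (n + 1) k * (k / p - (n + 1)) ^ 2
      = q * (n + 1) / p := by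
  have h (k : ℕ) : (k / p - (n + 1) : ℝ) ^ 2 = (p ^ 2)⁻¹ * (k - (n + 1) * p) ^ 2 := by
    field_simp
  simp only [h, mul_left_comm _ (p ^ 2)⁻¹, ← mul_sum, sum_sq_sub_mean hpq]
  field_simp

lemma sum_sub_mean_div (hpq : p + q = 1) (hq : 0 < q) (n : ℕ) :
    ∑ k ∈ range (n + 2), binomWeight p q (n + 1) k * ((k - (n + 1) * p) / (k + q))
      = -((n + 1) * p * q *
          ∑ j ∈ range (n + 1), binomWeight p q n j / ((j + q) * (j + q + 1))) := by
  simp only [div_eq_mul_inv, sum_sub_mean_mul hpq n (fun k => ((k : ℝ) + q)⁻¹), mul_sum,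
    ← sum_neg_distrib]
  refine sum_congr rfl fun j _ => ?_
  have h₀ : (j + q : ℝ) ≠ 0 := by positivity
  have h₁ : (j + q + 1 : ℝ) ≠ 0 := by positivity
  push_cast
  field_simp
  ring

lemma sum_div_sq_le (hp : 0 < p) (hq : 0 < q) (hpq : p + q = 1) (n : ℕ) :
    ∑ k ∈ range (n + 2), binomWeight p q (n + 1) k / (k + q) ^ 2
      ≤ 2 * ∑ j ∈ range (n + 1), binomWeight p q n j / ((j + q) * (j + q + 1)) := by
  simp only [div_eq_mul_inv, sum_succ p q n (fun k => (((k : ℝ) + q) ^ 2)⁻¹), mul_sum,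
    ← sum_add_distrib]
  refine sum_le_sum fun j hj => ?_
  have hW := (pos hp hq (Nat.lt_succ_iff.mp (mem_range.mp hj))).le
  have h := div_add_one_sq_add_div_sq_le hp.le hpq hq (le_add_of_nonneg_left (Nat.cast_nonneg j))
  simp only [div_eq_mul_inv] at h
  push_cast
  rw [add_right_comm (j : ℝ) 1 q]
  nlinarith [mul_le_mul_of_nonneg_left h hW]

end binomWeight

open binomWeight

lemma plugIn_sub_sq {p q k d : ℝ} (hp : p ≠ 0) (hk : k + q ≠ 0) :
    (k ^ 2 / (p * (k + q)) + q / p - d) ^ 2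
      = (k / p - d) ^ 2 + q ^ 2 / p ^ 2 * (2 * ((k - d * p) / (k + q)) + q ^ 2 / (k + q) ^ 2) := by
  field_simp
  ring

lemma sum_plugIn_risk_lt {p q : ℝ} (hp : 0 < p) (hq : 0 < q) (hpq : p + q = 1) (n : ℕ)
    (hn : q < (n + 1) * p) :
    ∑ k ∈ range (n + 2),
        binomWeight p q (n + 1) k * (k ^ 2 / (p * (k + q)) + q / p - (n + 1)) ^ 2
      < ∑ k ∈ range (n + 2), binomWeight p q (n + 1) k * (k / p - (n + 1)) ^ 2 := by
  set B := ∑ k ∈ range (n + 2), binomWeight p q (n + 1) k * ((k - (n + 1) * p) / (k + q))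
  set A := ∑ k ∈ range (n + 2), binomWeight p q (n + 1) k / (k + q) ^ 2
  set S := ∑ j ∈ range (n + 1), binomWeight p q n j / ((j + q) * (j + q + 1))
  have hS : 0 < S := sum_pos (fun j hj => by
    have := pos hp hq (Nat.lt_succ_iff.mp (mem_range.mp hj)); positivity) nonempty_range_add_one
  have hsplit : ∑ k ∈ range (n + 2),
        binomWeight p q (n + 1) k * (k ^ 2 / (p * (k + q)) + q / p - (n + 1)) ^ 2
      = ∑ k ∈ range (n + 2), binomWeight p q (n + 1) k * (k / p - (n + 1)) ^ 2
        + q ^ 2 / p ^ 2 * (2 * B + q ^ 2 * A) := by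
    simp only [B, A, mul_sum, ← sum_add_distrib]
    refine sum_congr rfl fun k _ => ?_
    rw [plugIn_sub_sq hp.ne' (by positivity)]
    ring
  have hneg : 2 * B + q ^ 2 * A < 0 :=
    calc 2 * B + q ^ 2 * A ≤ 2 * -((n + 1) * p * q * S) + q ^ 2 * (2 * S) := by
          rw [show B = _ from sum_sub_mean_div hpq hq n]
          gcongr
          exact sum_div_sq_le hp hq hpq n
      _ = 2 * q * S * (q - (n + 1) * p) := by ring
      _ < 0 := mul_neg_of_pos_of_neg (by positivity) (sub_neg.mpr hn)
  rw [hsplit]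
  linarith [mul_neg_of_pos_of_neg (by positivity : 0 < q ^ 2 / p ^ 2) hneg]

lemma integral_comp_eq_sum_range {Ω : Type*} [MeasurableSpace Ω] {μ : Measure Ω}
    [IsFiniteMeasure μ] {X : Ω → ℕ} (hX : Measurable X) {n : ℕ} (hXn : ∀ᵐ ω ∂μ, X ω ≤ n)
    (f : ℕ → ℝ) :
    ∫ ω, f (X ω) ∂μ = ∑ k ∈ range (n + 1), μ.real {ω | X ω = k} * f k := by
  have hmeas : ∀ k : ℕ, MeasurableSet {ω | X ω = k} := fun k => hX (measurableSet_singleton k)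
  have hfin : (fun ω => f (X ω)) =ᵐ[μ]
      fun ω => ∑ k ∈ range (n + 1), {ω' | X ω' = k}.indicator (fun _ => f k) ω := by
    filter_upwards [hXn] with ω hω
    simp [Set.indicator_apply, Nat.lt_succ_iff.mpr hω]
  rw [integral_congr_ae hfin,
    integral_finsetSum _ fun k _ => (integrable_const (f k)).indicator (hmeas k)]
  exact sum_congr rfl fun k _ => by rw [integral_indicator_const _ (hmeas k), smul_eq_mul]

lemma integral_comp_eq_sum_binomWeight {Ω : Type*} [MeasurableSpace Ω] {μ : Measure Ω}
    [IsFiniteMeasure μ] {X : Ω → ℕ} (hX : Measurable X) {p q : ℝ} {n : ℕ}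
    (hlaw : ∀ k, μ.real {ω | X ω = k} = binomWeight p q n k) (f : ℕ → ℝ) :
    ∫ ω, f (X ω) ∂μ = ∑ k ∈ range (n + 1), binomWeight p q n k * f k := by
  have hnull : ∀ k, n < k → μ {ω | X ω = k} = 0 := fun k hk => by
    have h := hlaw k
    rw [binomWeight, Nat.choose_eq_zero_of_lt hk, Nat.cast_zero, zero_mul, zero_mul,
      measureReal_eq_zero_iff] at h
    exact h
  have hXn : ∀ᵐ ω ∂μ, X ω ≤ n := by
    rw [ae_iff]
    exact measure_mono_null (fun ω hω => Set.mem_biUnion (x := X ω) (not_le.mp hω) rfl)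
      ((measure_biUnion_null_iff (Set.to_countable _)).mpr hnull)
  rw [integral_comp_eq_sum_range hX hXn]
  simp only [hlaw]

/-- For `X ~ Binomial(d, p)` with `0 < p < 1` and true degree `d > (1-p)/p`, the
bias-corrected plug-in univariate risk minimizer `T(X) = X²/(p(X+1-p)) + (1-p)/p`
has strictly smaller quadratic risk than the MME `X/p`, whose risk is `(1-p)d/p`. -/
theorem stmt3 {Ω : Type*} [MeasureSpace Ω] [IsProbabilityMeasure (ℙ : Measure Ω)]
    (p : ℝ) (hp : p ∈ Set.Ioo (0 : ℝ) 1) (d : ℕ) (hd : (1 - p) / p < (d : ℝ))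
    (X : Ω → ℕ) (hX : Measurable X)
    (hdist : ∀ k : ℕ, (ℙ {ω | X ω = k}).toReal = (d.choose k : ℝ) * p ^ k * (1 - p) ^ (d - k)) :
    (∫ ω, ((X ω : ℝ) ^ 2 / (p * ((X ω : ℝ) + 1 - p)) + (1 - p) / p - (d : ℝ)) ^ 2)
        < (∫ ω, ((X ω : ℝ) / p - (d : ℝ)) ^ 2) ∧
    (∫ ω, ((X ω : ℝ) / p - (d : ℝ)) ^ 2) = (1 - p) * d / p := by
  obtain ⟨hp₀, hp₁⟩ := hp
  have hq : 0 < 1 - p := sub_pos.mpr hp₁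
  have hpq : p + (1 - p) = 1 := add_sub_cancel p 1
  have hdp : 1 - p < d * p := (div_lt_iff₀ hp₀).mp hd
  obtain ⟨n, rfl⟩ : ∃ n, d = n + 1 :=
    Nat.exists_eq_add_one.mpr (by exact_mod_cast (div_pos hq hp₀).trans hd)
  have hlaw := integral_comp_eq_sum_binomWeight hX hdist
  push_cast at hdp ⊢
  simp only [add_sub_assoc _ (1 : ℝ) p]
  rw [hlaw fun k => ((k : ℝ) ^ 2 / (p * (k + (1 - p))) + (1 - p) / p - (n + 1)) ^ 2,
    hlaw fun k => ((k : ℝ) / p - (n + 1)) ^ 2]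
  exact ⟨sum_plugIn_risk_lt hp₀ hq hpq n hdp, sum_div_sub_sq hp₀.ne' hpq n⟩
end

section
/- Let p ∈ (0,1), let d ∈ ℝⁿ, and let D be a symmetric positive-definite n×n real matrix. Then the matrix M = p² d dᵀ + p(1−p) D is positive definite (hence invertible), and the matrix A* = p · d dᵀ M⁻¹ minimizes the function f(A) = ‖(pA − I)d‖² + p(1−p)·tr(A D Aᵀ) over all n×n real matrices A; that is, f(A*) ≤ f(A) for every n×n real matrix A. -/
/-!
Writing `M = p² d dᵀ + p(1-p) D` and `K = p d dᵀ`, the risk is the matrix quadratic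
`f A = tr(A M Aᵀ) - 2 tr(K Aᵀ) + ‖d‖²`. Since `M` is symmetric and `A* M = K`, completing
the square gives `f A = tr((A - A*) M (A - A*)ᵀ) + f A*`, and the first term is nonnegative
because `M` is positive definite.
-/

open Matrix

theorem trace_mul_mul_transpose_sub_eq_of_mul_eq {l m R : Type*} [Fintype l] [Fintype m]
    [CommRing R] {M : Matrix m m R} {A₀ K : Matrix l m R}
    (hM : Mᵀ = M) (hK : A₀ * M = K) (A : Matrix l m R) :
    (A * M * Aᵀ).trace - 2 * (K * Aᵀ).trace =
      ((A - A₀) * M * (A - A₀)ᵀ).trace - (A₀ * M * A₀ᵀ).trace := by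
  have hcross : (A * M * A₀ᵀ).trace = (K * Aᵀ).trace := by
    rw [← trace_transpose, transpose_mul, transpose_mul, transpose_transpose, hM, ← hK,
      Matrix.mul_assoc]
  rw [transpose_sub, Matrix.sub_mul, Matrix.mul_sub, Matrix.sub_mul, Matrix.sub_mul,
    trace_sub, trace_sub, trace_sub, hcross, hK]
  ring

theorem sum_sq_mulVec_add_trace_eq {m : Type*} [Fintype m] [DecidableEq m]
    (p c : ℝ) (d : m → ℝ) (D A : Matrix m m ℝ) :
    (∑ i, ((p • A - 1) *ᵥ d) i ^ 2) + c * (A * D * Aᵀ).trace =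
      (A * (p ^ 2 • vecMulVec d d + c • D) * Aᵀ).trace
        - 2 * ((p • vecMulVec d d) * Aᵀ).trace + d ⬝ᵥ d := by
  have hsq :
      ∑ i, ((p • A - 1) *ᵥ d) i ^ 2 = (p • (A *ᵥ d) - d) ⬝ᵥ (p • (A *ᵥ d) - d) := by
    rw [sub_mulVec, smul_mulVec, one_mulVec]
    simp only [dotProduct, sq]
  have hquad : (A * vecMulVec d d * Aᵀ).trace = (A *ᵥ d) ⬝ᵥ (A *ᵥ d) := by
    rw [mul_vecMulVec, vecMulVec_mul, trace_vecMulVec, vecMul_transpose]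
  have hlin : (vecMulVec d d * Aᵀ).trace = d ⬝ᵥ (A *ᵥ d) := by
    rw [vecMulVec_mul, trace_vecMulVec, vecMul_transpose]
  rw [hsq, mul_add, add_mul, Matrix.mul_smul, Matrix.mul_smul, Matrix.smul_mul, Matrix.smul_mul,
    trace_add, trace_smul, trace_smul, Matrix.smul_mul, trace_smul, hquad, hlin]
  simp only [dotProduct_sub, sub_dotProduct, dotProduct_smul, smul_dotProduct, smul_eq_mul,
    dotProduct_comm (A *ᵥ d) d]
  ring

/-- For `0 < p < 1`, `d ∈ ℝⁿ` and `D` symmetric positive definite, the matrix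
`M = p² d dᵀ + p(1-p) D` is positive definite (hence invertible), and
`A* = p d dᵀ M⁻¹` minimizes the total quadratic risk
`f(A) = ‖(pA - I)d‖² + p(1-p) tr(A D Aᵀ)` over all `n × n` matrices `A`. -/
theorem stmt5 (n : ℕ) (p : ℝ) (hp : p ∈ Set.Ioo (0 : ℝ) 1) (d : Fin n → ℝ)
    (D : Matrix (Fin n) (Fin n) ℝ) (hD : D.PosDef)
    (f : Matrix (Fin n) (Fin n) ℝ → ℝ)
    (hf : ∀ A, f A = (∑ i, ((p • A - 1).mulVec d i) ^ 2) + p * (1 - p) * (A * D * Aᵀ).trace) :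
    (p ^ 2 • vecMulVec d d + (p * (1 - p)) • D).PosDef ∧
    IsUnit (p ^ 2 • vecMulVec d d + (p * (1 - p)) • D) ∧
    ∀ A, f (p • (vecMulVec d d * (p ^ 2 • vecMulVec d d + (p * (1 - p)) • D)⁻¹)) ≤ f A := by
  set M := p ^ 2 • vecMulVec d d + (p * (1 - p)) • D
  have hMpos : M.PosDef := by
    have hdd : (vecMulVec d d).PosSemidef := by simpa using posSemidef_vecMulVec_self_star d
    exact PosDef.posSemidef_add (hdd.smul (sq_nonneg p)) (hD.smul (by nlinarith [hp.1, hp.2]))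
  refine ⟨hMpos, hMpos.isUnit, fun A => ?_⟩
  set A₀ := p • (vecMulVec d d * M⁻¹)
  have hMsymm : Mᵀ = M := by simpa using hMpos.isHermitian.eq
  have hA₀ : A₀ * M = p • vecMulVec d d := by
    have hdet : IsUnit M.det := (isUnit_iff_isUnit_det M).mp hMpos.isUnit
    rw [Matrix.smul_mul, mul_assoc, nonsing_inv_mul M hdet, mul_one]
  have hsquare := trace_mul_mul_transpose_sub_eq_of_mul_eq hMsymm hA₀
  have hgap : 0 ≤ ((A - A₀) * M * (A - A₀)ᵀ).trace :=
    (hMpos.posSemidef.mul_mul_conjTranspose_same (A - A₀)).trace_nonneg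
  have hoptimum := hsquare A₀
  simp only [sub_self, zero_mul, trace_zero] at hoptimum
  rw [hf, hf, sum_sq_mulVec_add_trace_eq, sum_sq_mulVec_add_trace_eq]
  linarith [hsquare A]
end

section
/- Let p > 0, let d ∈ ℝⁿ, and let D be a symmetric positive-definite n×n real matrix. Then d dᵀ + D is positive definite (hence invertible), and (1/p)· d dᵀ (d dᵀ + D)⁻¹ d = (s/p)· d, where s = dᵀD⁻¹d / (1 + dᵀD⁻¹d) ∈ [0, 1). In particular, the plug-in multivariate risk minimizer (1/p) d dᵀ (d dᵀ + D)⁻¹ d is a shrinkage of the method of moments vector d/p by a scalar factor strictly less than 1. -/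
/-!
Since `D` is positive definite, `d dᵀ + D` is positive definite, and the Sherman–Morrison
computation `(d dᵀ + D) (D⁻¹ d) = (1 + q) d` with `q = dᵀ D⁻¹ d ≥ 0` gives
`(d dᵀ + D)⁻¹ d = (1 + q)⁻¹ D⁻¹ d`. Hence `d dᵀ (d dᵀ + D)⁻¹ d = (q / (1 + q)) d`.
-/

open Matrix

namespace Matrix

variable {n K : Type*} [Fintype n] [DecidableEq n] [Field K] {A : Matrix n n K}

theorem vecMulVec_add_mulVec_inv_mulVec (hA : IsUnit A) (u v : n → K) :
    (vecMulVec u v + A) *ᵥ (A⁻¹ *ᵥ u) = (1 + v ⬝ᵥ A⁻¹ *ᵥ u) • u := by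
  rw [add_mulVec, vecMulVec_mulVec, op_smul_eq_smul, mulVec_mulVec, mul_nonsing_inv _
    ((isUnit_iff_isUnit_det A).mp hA), one_mulVec, add_smul, one_smul, add_comm]

theorem inv_vecMulVec_add_mulVec {u v : n → K} (hA : IsUnit A) (hM : IsUnit (vecMulVec u v + A))
    (hq : 1 + v ⬝ᵥ A⁻¹ *ᵥ u ≠ 0) :
    (vecMulVec u v + A)⁻¹ *ᵥ u = (1 + v ⬝ᵥ A⁻¹ *ᵥ u)⁻¹ • (A⁻¹ *ᵥ u) := by
  have := hM.invertible
  refine inv_mulVec_eq_vec ?_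
  rw [mulVec_smul, vecMulVec_add_mulVec_inv_mulVec hA, smul_smul, inv_mul_cancel₀ hq, one_smul]

theorem vecMulVec_mul_inv_vecMulVec_add_mulVec {u v : n → K} (hA : IsUnit A)
    (hM : IsUnit (vecMulVec u v + A)) (hq : 1 + v ⬝ᵥ A⁻¹ *ᵥ u ≠ 0) :
    (vecMulVec u v * (vecMulVec u v + A)⁻¹) *ᵥ u
      = ((v ⬝ᵥ A⁻¹ *ᵥ u) / (1 + v ⬝ᵥ A⁻¹ *ᵥ u)) • u := by
  rw [← mulVec_mulVec, inv_vecMulVec_add_mulVec hA hM hq, vecMulVec_mulVec, op_smul_eq_smul,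
    dotProduct_smul, smul_eq_mul, div_eq_inv_mul]

end Matrix

theorem div_one_add_mem_Ico {K : Type*} [Field K] [LinearOrder K] [IsStrictOrderedRing K] {q : K}
    (hq : 0 ≤ q) : q / (1 + q) ∈ Set.Ico 0 1 :=
  ⟨by positivity, (div_lt_one (by positivity)).mpr (lt_one_add q)⟩

theorem stmt6_general (n : ℕ) (p : ℝ) (d : Fin n → ℝ)
    (D : Matrix (Fin n) (Fin n) ℝ) (hD : D.PosDef) :
    (vecMulVec d d + D).PosDef ∧
    IsUnit (vecMulVec d d + D) ∧
    (d ⬝ᵥ D⁻¹.mulVec d) / (1 + d ⬝ᵥ D⁻¹.mulVec d) ∈ Set.Ico (0 : ℝ) 1 ∧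
    (1 / p) • (vecMulVec d d * (vecMulVec d d + D)⁻¹).mulVec d
      = (((d ⬝ᵥ D⁻¹.mulVec d) / (1 + d ⬝ᵥ D⁻¹.mulVec d)) / p) • d := by
  have hq : 0 ≤ d ⬝ᵥ D⁻¹ *ᵥ d := by simpa using hD.inv.posSemidef.dotProduct_mulVec_nonneg d
  have hM : (vecMulVec d d + D).PosDef := by
    simpa using PosDef.posSemidef_add (posSemidef_vecMulVec_self_star d) hD
  refine ⟨hM, hM.isUnit, div_one_add_mem_Ico hq, ?_⟩
  rw [vecMulVec_mul_inv_vecMulVec_add_mulVec hD.isUnit hM.isUnit (by positivity), smul_smul,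
    one_div_mul_eq_div]

/-- For `p > 0`, `d ∈ ℝⁿ` and `D` symmetric positive definite, `d dᵀ + D` is positive
definite (hence invertible), and the plug-in multivariate risk minimizer
`(1/p) d dᵀ (d dᵀ + D)⁻¹ d` equals `(s/p) d` where
`s = dᵀ D⁻¹ d / (1 + dᵀ D⁻¹ d) ∈ [0,1)`: a shrinkage of the MME vector `d/p`. -/
theorem stmt6 (n : ℕ) (p : ℝ) (hp : 0 < p) (d : Fin n → ℝ)
    (D : Matrix (Fin n) (Fin n) ℝ) (hD : D.PosDef) :
    (vecMulVec d d + D).PosDef ∧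
    IsUnit (vecMulVec d d + D) ∧
    (d ⬝ᵥ D⁻¹.mulVec d) / (1 + d ⬝ᵥ D⁻¹.mulVec d) ∈ Set.Ico (0 : ℝ) 1 ∧
    (1 / p) • (vecMulVec d d * (vecMulVec d d + D)⁻¹).mulVec d
      = (((d ⬝ᵥ D⁻¹.mulVec d) / (1 + d ⬝ᵥ D⁻¹.mulVec d)) / p) • d :=
  stmt6_general n p d D hD
end

section
/- Let p ∈ (0,1), x ∈ ℕ, ε > 0, and let π, π̂ : ℕ → [0,∞) satisfy sup_{d ∈ ℕ} |π̂(d) − π(d)| < ε. Then | Σ_{d ≥ x} d·C(d,x)(1−p)^d π̂(d) − Σ_{d ≥ x} d·C(d,x)(1−p)^d π(d) | < ε (1−p)^x (x + 1 − p) / p^{x+2}. -/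
/-!
With `r = 1 - p`, the weights `w d = d * C(d, x) * r ^ d` are nonnegative and sum to
`r ^ x * (x + r) / (1 - r) ^ (x + 2)`: split `d * C(d, x) = x * C(d, x) + (x + 1) * C(d, x + 1)`
and use the negative binomial series `∑ C(d, k) r ^ d = r ^ k / (1 - r) ^ (k + 1)`.
The difference of the two numerators is `∑ w d * (π̂ d - π d)`, whose terms are bounded by
`ε * w d`, strictly at `d = x + 1`.
-/

theorem Nat.mul_choose_eq_mul_choose_add_succ_mul_choose_succ (n k : ℕ) :
    n * n.choose k = k * n.choose k + (k + 1) * n.choose (k + 1) := by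
  rcases lt_or_ge n k with hnk | hkn
  · simp [Nat.choose_eq_zero_of_lt hnk, Nat.choose_eq_zero_of_lt (hnk.trans k.lt_succ_self)]
  · rw [mul_comm (k + 1), Nat.choose_succ_right_eq, mul_comm k, ← Nat.mul_add,
      Nat.add_sub_cancel' hkn, mul_comm]

section GeometricChoose

variable {𝕜 : Type*} [NormedField 𝕜] {r : 𝕜}

theorem hasSum_choose_mul_geometric (k : ℕ) (hr : ‖r‖ < 1) :
    HasSum (fun n : ℕ => (n.choose k : 𝕜) * r ^ n) (r ^ k / (1 - r) ^ (k + 1)) := by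
  have hshift := (hasSum_choose_mul_geometric_of_norm_lt_one k hr).mul_left (r ^ k)
  rw [← hasSum_nat_add_iff' k, Finset.sum_eq_zero fun n hn => by
    rw [Nat.choose_eq_zero_of_lt (Finset.mem_range.mp hn), Nat.cast_zero, zero_mul], sub_zero]
  convert! hshift using 1
  · ext n; ring
  · ring

theorem hasSum_mul_choose_mul_geometric (k : ℕ) (hr : ‖r‖ < 1) :
    HasSum (fun n : ℕ => (n : 𝕜) * n.choose k * r ^ n) (r ^ k * (k + r) / (1 - r) ^ (k + 2)) := by
  have hr1 : 1 - r ≠ 0 := sub_ne_zero.mpr fun h => by simp [← h] at hr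
  have hsum := ((hasSum_choose_mul_geometric k hr).mul_left (k : 𝕜)).add
    ((hasSum_choose_mul_geometric (k + 1) hr).mul_left ((k : 𝕜) + 1))
  convert! hsum using 1
  · ext n
    have := congrArg (Nat.cast : ℕ → 𝕜) (Nat.mul_choose_eq_mul_choose_add_succ_mul_choose_succ n k)
    push_cast at this
    linear_combination r ^ n * this
  · field_simp
    ring

end GeometricChoose

theorem abs_tsum_mul_sub_tsum_mul_lt {ι : Type*} {f a b : ι → ℝ} {S ε : ℝ} (hf : HasSum f S)
    (hf0 : ∀ d, 0 ≤ f d) {i : ι} (hi : 0 < f i) (hab : ∀ d, |a d - b d| < ε) :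
    |∑' d, f d * a d - ∑' d, f d * b d| < ε * S := by
  have hε : 0 < ε := (abs_nonneg _).trans_lt (hab i)
  have habs_eq : ∀ d, |f d * a d - f d * b d| = f d * |a d - b d| := fun d => by
    rw [← mul_sub, abs_mul, abs_of_nonneg (hf0 d)]
  have hle : ∀ d, |f d * a d - f d * b d| ≤ f d * ε := fun d => by
    rw [habs_eq]; exact mul_le_mul_of_nonneg_left (hab d).le (hf0 d)
  have hlt : |f i * a i - f i * b i| < f i * ε := by
    rw [habs_eq]; exact mul_lt_mul_of_pos_left (hab i) hi
  have hfε : HasSum (fun d => f d * ε) (S * ε) := hf.mul_right ε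
  have hdiff : Summable fun d => f d * a d - f d * b d := hfε.summable.of_norm_bounded hle
  by_cases hb : Summable fun d => f d * b d
  · have ha : Summable fun d => f d * a d := (summable_iff_of_summable_sub hdiff).mpr hb
    rw [← ha.tsum_sub hb, abs_lt, mul_comm ε]
    constructor
    · exact hasSum_lt (fun d => neg_le_of_abs_le (hle d)) (neg_lt_of_abs_lt hlt) hfε.neg
        hdiff.hasSum
    · exact hasSum_lt (fun d => le_of_abs_le (hle d)) (lt_of_abs_lt hlt) hdiff.hasSum hfε
  -- Otherwise neither series converges and both `tsum`s take the junk value `0`.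
  · have ha : ¬ Summable fun d => f d * a d := mt (summable_iff_of_summable_sub hdiff).mp hb
    rw [tsum_eq_zero_of_not_summable ha, tsum_eq_zero_of_not_summable hb, sub_zero, abs_zero]
    exact mul_pos hε (hasSum_lt hf0 hi hasSum_zero hf)

theorem stmt12_general (p : ℝ) (hp : p ∈ Set.Ioo (0 : ℝ) 1) (x : ℕ) (ε : ℝ)
    (π πh : ℕ → ℝ) (hclose : ∀ d : ℕ, |πh d - π d| < ε) :
    |(∑' d : ℕ, (d : ℝ) * (d.choose x : ℝ) * (1 - p) ^ d * πh d)
        - ∑' d : ℕ, (d : ℝ) * (d.choose x : ℝ) * (1 - p) ^ d * π d|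
      < ε * (1 - p) ^ x * ((x : ℝ) + 1 - p) / p ^ (x + 2) := by
  obtain ⟨hp0, hp1⟩ := hp
  have hr : ‖1 - p‖ < 1 := by rw [Real.norm_eq_abs, abs_lt]; constructor <;> linarith
  have hsum := hasSum_mul_choose_mul_geometric x hr
  rw [sub_sub_cancel] at hsum
  have hpos : 0 < ((x + 1 : ℕ) : ℝ) * ((x + 1).choose x : ℝ) * (1 - p) ^ (x + 1) := by
    have := Nat.choose_pos (Nat.le_succ x)
    have : 0 < 1 - p := by linarith
    positivity
  convert abs_tsum_mul_sub_tsum_mul_lt hsum (fun d => by positivity) hpos hclose using 1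
  ring

/-- If the priors `π` and `π̂` (nonnegative functions on ℕ) satisfy
`sup_d |π̂(d) - π(d)| < ε`, then the numerators of the Bayes and empirical Bayes
estimators differ by less than `ε (1-p)^x (x+1-p) / p^(x+2)`. (Binomial coefficients
`C(d,x)` vanish for `d < x`, so the sums `Σ_{d ≥ x}` are over all `d ∈ ℕ`.) -/
theorem stmt12 (p : ℝ) (hp : p ∈ Set.Ioo (0 : ℝ) 1) (x : ℕ) (ε : ℝ) (hε : 0 < ε)
    (π πh : ℕ → ℝ) (hπ0 : ∀ d, 0 ≤ π d) (hπh0 : ∀ d, 0 ≤ πh d)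
    (hclose : ∀ d : ℕ, |πh d - π d| < ε) :
    |(∑' d : ℕ, (d : ℝ) * (d.choose x : ℝ) * (1 - p) ^ d * πh d)
        - ∑' d : ℕ, (d : ℝ) * (d.choose x : ℝ) * (1 - p) ^ d * π d|
      < ε * (1 - p) ^ x * ((x : ℝ) + 1 - p) / p ^ (x + 2) :=
  stmt12_general p hp x ε π πh hclose
end

section
/- Let p ∈ (0,1), λ > 0, and let d ∈ ℕ satisfy λ + ((1+p)/p)(1/2 − √(λp/(1+p) + 1/4)) ≤ d ≤ λ + ((1+p)/p)(1/2 + √(λp/(1+p) + 1/4)) (equivalently, (λ − d)² ≤ d(1+p)/p). Let X be a binomial random variable with parameters d and p. Then E[(X + λ(1−p) − d)²] ≤ E[(X/p − d)²] = (1−p)d/p; that is, the quadratic risk of the Bayes estimator X + λ(1−p) arising from a Poisson(λ) prior is at most that of the method of moments estimator X/p. -/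
/-!
For `X ~ Bin(d, p)` every affine estimator has risk
`E[(c (X - d p) + e)²] = c² d p (1 - p) + e²`. The method of moments estimator is the case
`c = 1/p, e = 0`, the Bayes estimator the case `c = 1, e = (1 - p)(λ - d)`, so the comparison
reduces to `(λ - d)² ≤ d (1 + p) / p`, which is the interval hypothesis after completing the
square in `d`.
-/

open MeasureTheory ProbabilityTheory Finset
open scoped unitInterval

section BinomialSums

variable {R : Type*} [CommRing R]

theorem sum_range_mul_choose_succ_mul_pow (n : ℕ) (x y : R) (g : ℕ → R) :
    ∑ k ∈ range (n + 2), (k : R) * (n + 1).choose k * x ^ k * y ^ (n + 1 - k) * g k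
      = (n + 1) * x * ∑ i ∈ range (n + 1), n.choose i * x ^ i * y ^ (n - i) * g (i + 1) := by
  rw [sum_range_succ', mul_sum]
  simp only [Nat.cast_zero, zero_mul, add_zero, Nat.add_sub_add_right]
  refine sum_congr rfl fun i _ => ?_
  have h := congrArg (Nat.cast : ℕ → R) (Nat.add_one_mul_choose_eq n i)
  push_cast at h ⊢
  linear_combination (-(x ^ (i + 1) * y ^ (n - i) * g (i + 1))) * h

theorem sum_range_mul_choose_mul_pow (n : ℕ) (x y : R) :
    ∑ k ∈ range (n + 1), (k : R) * n.choose k * x ^ k * y ^ (n - k)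
      = n * x * (x + y) ^ (n - 1) := by
  cases n with
  | zero => simp
  | succ n =>
    calc _ = ∑ k ∈ range (n + 2), (k : R) * (n + 1).choose k * x ^ k * y ^ (n + 1 - k) * 1 := by
          simp only [mul_one]
      _ = _ := by
          rw [sum_range_mul_choose_succ_mul_pow, add_pow, Nat.add_sub_cancel]
          push_cast
          exact congrArg _ (sum_congr rfl fun i _ => by ring)

theorem sum_range_mul_sub_one_mul_choose_mul_pow (n : ℕ) (x y : R) :
    ∑ k ∈ range (n + 1), (k : R) * (k - 1) * n.choose k * x ^ k * y ^ (n - k)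
      = n * (n - 1) * x ^ 2 * (x + y) ^ (n - 2) := by
  cases n with
  | zero => simp
  | succ n =>
    calc _ = ∑ k ∈ range (n + 2),
            (k : R) * (n + 1).choose k * x ^ k * y ^ (n + 1 - k) * ((k : ℕ) - 1 : R) :=
          sum_congr rfl fun k _ => by ring
      _ = (n + 1) * x * ∑ i ∈ range (n + 1), (i : R) * n.choose i * x ^ i * y ^ (n - i) := by
          rw [sum_range_mul_choose_succ_mul_pow]
          push_cast
          exact congrArg _ (sum_congr rfl fun i _ => by ring)
      _ = _ := by
          rw [sum_range_mul_choose_mul_pow, show n + 1 - 2 = n - 1 by omega]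
          push_cast
          ring

end BinomialSums

namespace ProbabilityTheory

variable {n : ℕ} {p : I}

lemma integral_binomial_cast : ∫ k, (k : ℝ) ∂Bin(n, p) = n * p := by
  rw [integral_binomial, ← Nat.range_succ_eq_Iic]
  simpa [add_sub_cancel, mul_assoc, mul_comm, mul_left_comm] using
    sum_range_mul_choose_mul_pow n (p : ℝ) (1 - p)

lemma integral_binomial_cast_mul_sub_one :
    ∫ k, (k : ℝ) * (k - 1) ∂Bin(n, p) = n * (n - 1) * p ^ 2 := by
  rw [integral_binomial, ← Nat.range_succ_eq_Iic]
  simpa [add_sub_cancel, mul_assoc, mul_comm, mul_left_comm] using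
    sum_range_mul_sub_one_mul_choose_mul_pow n (p : ℝ) (1 - p)

lemma integral_binomial_sq_affine (c e : ℝ) :
    ∫ k, (c * ((k : ℝ) - n * p) + e) ^ 2 ∂Bin(n, p) = c ^ 2 * (n * p * (1 - p)) + e ^ 2 := by
  have hsplit : (fun k : ℕ ↦ (c * ((k : ℝ) - n * p) + e) ^ 2) = fun k : ℕ ↦
      c ^ 2 * ((k : ℝ) * (k - 1))
        + ((c ^ 2 + 2 * c * (e - c * n * p)) * k + (e - c * n * p) ^ 2) := by
    funext k
    ring
  rw [hsplit, integral_add (integrable_binomial _) (integrable_binomial _),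
    integral_add (integrable_binomial _) (integrable_binomial _), integral_const_mul,
    integral_const_mul, integral_const, integral_binomial_cast_mul_sub_one,
    integral_binomial_cast]
  simp only [probReal_univ, smul_eq_mul, one_mul]
  ring

lemma hasLaw_binomial_of_measureReal {Ω : Type*} [MeasurableSpace Ω] {P : Measure Ω}
    [IsFiniteMeasure P] {X : Ω → ℕ} (hX : Measurable X)
    (h : ∀ k, P.real {ω | X ω = k} = n.choose k * p ^ k * (1 - p) ^ (n - k)) :
    HasLaw X Bin(n, p) P where
  map_eq := by
    refine Measure.ext_of_measureReal_singleton fun k ↦ ?_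
    rw [map_measureReal_apply hX (measurableSet_singleton k), binomial_real_singleton]
    exact h k

end ProbabilityTheory

theorem sq_sub_le_mul_of_mem_Icc {lam c x : ℝ} (hc : 0 < c) (hlam : 0 ≤ lam)
    (hlo : lam + c * (1 / 2 - √(lam / c + 1 / 4)) ≤ x)
    (hhi : x ≤ lam + c * (1 / 2 + √(lam / c + 1 / 4))) :
    (lam - x) ^ 2 ≤ c * x := by
  have hroot : (c * √(lam / c + 1 / 4)) ^ 2 = c * lam + c ^ 2 / 4 := by
    rw [mul_pow, Real.sq_sqrt (by positivity)]
    field_simp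
  have hdist : (x - (lam + c / 2)) ^ 2 ≤ (c * √(lam / c + 1 / 4)) ^ 2 :=
    sq_le_sq' (by linarith) (by linarith)
  linear_combination hdist + hroot

/-- Proposition 5 of the paper: for `X ~ Binomial(d, p)` with true degree `d` lying in the
interval `λ + ((1+p)/p)(1/2 ∓ √(λp/(1+p) + 1/4))` around the prior mean `λ`, the quadratic
risk of the Bayes estimator `X + λ(1-p)` (arising from a `Poisson(λ)` prior) is at most
that of the MME `X/p`, whose risk is `(1-p)d/p`. -/
theorem stmt17 {Ω : Type*} [MeasureSpace Ω] [IsProbabilityMeasure (ℙ : Measure Ω)]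
    (p : ℝ) (hp : p ∈ Set.Ioo (0 : ℝ) 1) (lam : ℝ) (hlam : 0 < lam) (d : ℕ)
    (hlo : lam + ((1 + p) / p) * (1 / 2 - Real.sqrt (lam * p / (1 + p) + 1 / 4)) ≤ (d : ℝ))
    (hhi : (d : ℝ) ≤ lam + ((1 + p) / p) * (1 / 2 + Real.sqrt (lam * p / (1 + p) + 1 / 4)))
    (X : Ω → ℕ) (hX : Measurable X)
    (hdist : ∀ k : ℕ, (ℙ {ω | X ω = k}).toReal = (d.choose k : ℝ) * p ^ k * (1 - p) ^ (d - k)) :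
    (∫ ω, ((X ω : ℝ) + lam * (1 - p) - (d : ℝ)) ^ 2)
        ≤ (∫ ω, ((X ω : ℝ) / p - (d : ℝ)) ^ 2) ∧
    (∫ ω, ((X ω : ℝ) / p - (d : ℝ)) ^ 2) = (1 - p) * d / p := by
  obtain ⟨hp0, hp1⟩ := hp
  have hlaw : HasLaw X Bin(d, ⟨p, hp0.le, hp1.le⟩) ℙ :=
    hasLaw_binomial_of_measureReal hX hdist
  have hrisk (c e : ℝ) :
      ∫ ω, (c * ((X ω : ℝ) - d * p) + e) ^ 2 = c ^ 2 * (d * p * (1 - p)) + e ^ 2 :=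
    (hlaw.integral_comp (f := fun k : ℕ ↦ (c * ((k : ℝ) - d * p) + e) ^ 2) .of_discrete).trans
      (integral_binomial_sq_affine c e)
  have hmme : ∫ ω, ((X ω : ℝ) / p - d) ^ 2 = (1 - p) * d / p := by
    have hrw (k : ℝ) : k / p - d = p⁻¹ * (k - d * p) + 0 := by field_simp; ring
    simp_rw [hrw, hrisk]
    field_simp
    ring
  have hbayes : ∫ ω, ((X ω : ℝ) + lam * (1 - p) - d) ^ 2
      = d * p * (1 - p) + (1 - p) ^ 2 * (lam - d) ^ 2 := by
    have hrw (k : ℝ) : k + lam * (1 - p) - d = 1 * (k - d * p) + (1 - p) * (lam - d) := by ring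
    simp_rw [hrw, hrisk]
    ring
  rw [← div_div_eq_mul_div] at hlo hhi
  have hdeg : (lam - d) ^ 2 ≤ (1 + p) / p * d :=
    sq_sub_le_mul_of_mem_Icc (by positivity) hlam.le hlo hhi
  refine ⟨?_, hmme⟩
  calc _ = d * p * (1 - p) + (1 - p) ^ 2 * (lam - d) ^ 2 := hbayes
    _ ≤ d * p * (1 - p) + (1 - p) ^ 2 * ((1 + p) / p * d) := by gcongr
    _ = _ := by rw [hmme]; field_simp; ring
end
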